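/- arXiv:1706.04043 — 2 statements merged into one kernel-verified Lean document; each statement's English description precedes it below -/
import Mathlib

section
/- Let α and β be types, let op : α → β → α, v : β, and let (op', v') be inverse to (op, v), i.e. for all w : α, op' (op w v) v' = w. Let L be a list of partial updates (qᵢ, uᵢ) with qᵢ : α → β → α and uᵢ : β, each of which is compatible with (op, v), i.e. for every (q, u) in L and all x : α, op (q x u) v = q (op x v) u. Then for all w : α, applying op' with argument v' to the left fold of L over op w v equals the left fold of L over w; that is, the update (op, v) can be undone after arbitrarily many compatible partial updates have been applied, yielding the value that would have resulted from executing only the other updates. -/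
theorem undo_after_many_compatible_updates
    {α β : Type*} (op : α → β → α) (v : β) (op' : α → β → α) (v' : β)
    (hinv : ∀ w : α, op' (op w v) v' = w)
    (L : List ((α → β → α) × β))
    (hcomm : ∀ p ∈ L, ∀ x : α, op (p.1 x p.2) v = p.1 (op x v) p.2) :
    ∀ w : α,
      op' (L.foldl (fun x p => p.1 x p.2) (op w v)) v' =
        L.foldl (fun x p => p.1 x p.2) w := by
  induction L with
  | nil => intro w; simpa using hinv w
  | cons p L ih =>
    intro w
    have h := hcomm p (by simp) w
    simp only [List.foldl_cons, ← h]
    exact ih (fun q hq x => hcomm q (List.mem_cons_of_mem _ hq) x) _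
end

section
/- Let α and β be types, and for i = 1, 2 let opᵢ : α → β → α, vᵢ : β, and let (opᵢ', vᵢ') be inverse to (opᵢ, vᵢ), i.e. for all w : α, opᵢ' (opᵢ w vᵢ) vᵢ' = w. Assume (op₁, v₁) and (op₂, v₂) are compatible, i.e. for all x : α, op₁ (op₂ x v₂) v₁ = op₂ (op₁ x v₁) v₂. Then although the inverse operations need not commute in general, they commute on every value v in the image of the combined update: for all v in the range of the map x ↦ op₁ (op₂ x v₂) v₁, one has op₁' (op₂' v v₂') v₁' = op₂' (op₁' v v₁') v₂'. -/
theorem inverse_ops_commute_on_range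
    {α β : Type*}
    (op₁ op₂ op₁' op₂' : α → β → α) (v₁ v₂ v₁' v₂' : β)
    (hinv₁ : ∀ w : α, op₁' (op₁ w v₁) v₁' = w)
    (hinv₂ : ∀ w : α, op₂' (op₂ w v₂) v₂' = w)
    (hcomm : ∀ x : α, op₁ (op₂ x v₂) v₁ = op₂ (op₁ x v₁) v₂) :
    ∀ v ∈ Set.range (fun x : α => op₁ (op₂ x v₂) v₁),
      op₁' (op₂' v v₂') v₁' = op₂' (op₁' v v₁') v₂' := by
  rintro v ⟨x, rfl⟩
  simp only []
  have h1 : op₁' (op₁ (op₂ x v₂) v₁) v₁' = op₂ x v₂ := hinv₁ _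
  have h2 : op₁ (op₂ x v₂) v₁ = op₂ (op₁ x v₁) v₂ := hcomm x
  rw [h1, hinv₂, h2, hinv₂, hinv₁]
end
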